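/- (Multiplicative embedding of JS into ℓ₂²) There is an absolute constant C > 0 such that for every integer d ≥ 1, every ε ∈ (0,1), and every finite set P ⊆ Δ_d with |P| = n ≥ 2, there exist an integer m ≤ C·n²·d³/ε² and a map φ : P → ℝ^m such that for all p, q ∈ P: (1−ε)·JS(p,q) ≤ ‖φ(p) − φ(q)‖₂² ≤ (1+ε)·JS(p,q). -/

import Mathlib

open Real

/-- One-dimensional Jensen–Shannon divergence (with `0·log 0 = 0`, `f_J(0,0) = 0`,
which hold automatically since `Real.log 0 = 0` and `0/0 = 0` in Lean). -/
noncomputable def fJ (x y : ℝ) : ℝ :=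
  x * Real.log (2 * x / (x + y)) + y * Real.log (2 * y / (x + y))

/-- The Jensen–Shannon divergence on the simplex `Δ_d`. -/
noncomputable def JS {d : ℕ} (p q : Fin d → ℝ) : ℝ := ∑ i, fJ (p i) (q i)

/-!
The Jensen–Shannon divergence is conditionally negative definite (of negative type), so by
Schoenberg's theorem any `n` points embed isometrically into `ℓ₂²` of dimension `n`: for a base
point `o` the matrix `(JS p o + JS o q - JS p q) / 2` is positive semidefinite, and the columns of a
factorization `Bᵀ B` of it do the job. This is within the required bound with `C = 1`.

Negative type: `f_J(x, y) = g x + g y - h (x + y)` with `g x = x log 2x` and `h s = s log s`, and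
the `g`-terms cancel against weights `c` with `∑ c = 0`. Writing `s log s = ∫₀¹ s(s-1)/(vs+1-v) dv`
and splitting the integrand into partial fractions, the only part that survives the cancellation
is a positive multiple of the Cauchy kernel `1 / (x_p + x_q + t)`, which is positive
semidefinite because `1 / a = ∫₀¹ u^(a-1) du`.
-/

open MeasureTheory intervalIntegral Matrix

theorem mul_add_one_sub_pos {s v : ℝ} (hs : 0 < s) (hv : v ∈ Set.Icc (0 : ℝ) 1) :
    0 < v * s + (1 - v) := by
  rcases hv.2.eq_or_lt with rfl | hv1
  · simpa using hs
  · nlinarith [hv.1]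

theorem continuousOn_mul_sub_one_div {s : ℝ} (hs : 0 ≤ s) :
    ContinuousOn (fun v => s * (s - 1) / (v * s + (1 - v))) (Set.Icc 0 1) := by
  rcases hs.eq_or_lt with rfl | hs
  · simpa using continuousOn_const
  · exact continuousOn_const.div (by fun_prop) fun v hv => (mul_add_one_sub_pos hs hv).ne'

theorem mul_log_eq_integral {s : ℝ} (hs : 0 ≤ s) :
    s * log s = ∫ v in (0 : ℝ)..1, s * (s - 1) / (v * s + (1 - v)) := by
  rcases hs.eq_or_lt with rfl | hs
  · simp
  have hderiv : ∀ v ∈ Set.uIcc (0 : ℝ) 1, HasDerivAt (fun v => s * log (v * s + (1 - v)))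
      (s * (s - 1) / (v * s + (1 - v))) v := by
    intro v hv
    rw [Set.uIcc_of_le zero_le_one] at hv
    have hlin : HasDerivAt (fun v => v * s + (1 - v)) (s - 1) v :=
      (((hasDerivAt_id v).mul_const s).add ((hasDerivAt_id v).const_sub 1)).congr_deriv (by ring)
    have hlog := (hasDerivAt_log (mul_add_one_sub_pos hs hv).ne').comp v hlin
    refine (hlog.const_mul s).congr_deriv ?_
    ring
  rw [integral_eq_sub_of_hasDerivAt hderiv
    ((continuousOn_mul_sub_one_div hs.le).intervalIntegrable_of_Icc zero_le_one)]
  simp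

theorem mul_sub_one_div_eq {s v : ℝ} (hs : 0 ≤ s) (hv : v ∈ Set.Ioo (0 : ℝ) 1) :
    s * (s - 1) / (v * s + (1 - v)) = (s - 1 / v) / v + (1 - v) / v ^ 3 / (s + (1 - v) / v) := by
  have hv0 : 0 < v := hv.1
  have ht : 0 < (1 - v) / v := div_pos (by linarith [hv.2]) hv0
  obtain ⟨D, hD, hsD⟩ : ∃ D, 0 < D ∧ s + (1 - v) / v = D := ⟨_, by linarith, rfl⟩
  have hden : v * s + (1 - v) = v * D := by rw [← hsD]; field_simp
  rw [hden, hsD]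
  field_simp
  linear_combination (s * v - 1) * hden

theorem mul_log_two_mul_div_add {x y : ℝ} (hx : 0 ≤ x) (hy : 0 ≤ y) :
    x * log (2 * x / (x + y)) = x * log (2 * x) - x * log (x + y) := by
  rcases hx.eq_or_lt with rfl | hx
  · simp
  · rw [log_div (by positivity) (by positivity), mul_sub]

theorem fJ_eq {x y : ℝ} (hx : 0 ≤ x) (hy : 0 ≤ y) :
    fJ x y = x * log (2 * x) + y * log (2 * y) - (x + y) * log (x + y) := by
  rw [fJ, mul_log_two_mul_div_add hx hy, add_comm x y, mul_log_two_mul_div_add hy hx, add_comm y x]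
  ring

theorem fJ_comm (x y : ℝ) : fJ x y = fJ y x := by
  rw [fJ, fJ, add_comm x y, add_comm]

theorem fJ_self (x : ℝ) : fJ x x = 0 := by
  rcases eq_or_ne x 0 with rfl | hx
  · simp [fJ]
  · simp [fJ, ← two_mul, hx]

theorem JS_comm {d : ℕ} (p q : Fin d → ℝ) : JS p q = JS q p :=
  Finset.sum_congr rfl fun _ _ => fJ_comm _ _

theorem JS_self {d : ℕ} (p : Fin d → ℝ) : JS p p = 0 := by
  simp [JS, fJ_self]

section Kernels

variable {ι : Type*} [Fintype ι]

def IsCondNegDef (D : ι → ι → ℝ) : Prop :=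
  ∀ c : ι → ℝ, ∑ i, c i = 0 → ∑ i, ∑ j, c i * c j * D i j ≤ 0

theorem sum_sum_mul_mul_add_eq_zero {c : ι → ℝ} (hc : ∑ i, c i = 0) (u w : ι → ℝ) :
    ∑ i, ∑ j, c i * c j * (u i + w j) = 0 := by
  have h : ∀ i j, c i * c j * (u i + w j) = c i * u i * c j + c i * (c j * w j) := by
    intro i j; ring
  simp only [h, Finset.sum_add_distrib, ← Finset.mul_sum, ← Finset.sum_mul, hc]
  simp

theorem sum_sum_nonneg_of_eq_integral {g : ι → ι → ℝ} {F : ι → ι → ℝ → ℝ}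
    (hF : ∀ i j, IntervalIntegrable (F i j) volume 0 1)
    (hg : ∀ i j, g i j = ∫ v in (0 : ℝ)..1, F i j v)
    (hpos : ∀ v ∈ Set.Ioo (0 : ℝ) 1, 0 ≤ ∑ i, ∑ j, F i j v) :
    0 ≤ ∑ i, ∑ j, g i j := by
  have hsum : ∑ i, ∑ j, g i j = ∫ v in (0 : ℝ)..1, ∑ i, ∑ j, F i j v := by
    simp only [hg, ← Fintype.sum_prod_type']
    rw [← integral_finsetSum fun ij _ => hF ij.1 ij.2]
  rw [hsum, integral_of_le zero_le_one, integral_Ioc_eq_integral_Ioo]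
  exact setIntegral_nonneg measurableSet_Ioo hpos

theorem sum_sum_mul_div_add_nonneg (a c : ι → ℝ) (ha : ∀ i, 0 < a i) :
    0 ≤ ∑ i, ∑ j, c i * c j / (a i + a j) := by
  have hexp : ∀ i j, 0 < a i + a j := fun i j => add_pos (ha i) (ha j)
  refine sum_sum_nonneg_of_eq_integral (F := fun i j u => c i * c j * u ^ (a i + a j - 1))
    (fun i j => (intervalIntegrable_rpow' (by linarith [hexp i j])).const_mul _)
    (fun i j => ?_) (fun u hu => ?_)
  · rw [intervalIntegral.integral_const_mul, integral_rpow (Or.inl (by linarith [hexp i j])),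
      sub_add_cancel, one_rpow, zero_rpow (hexp i j).ne', sub_zero, mul_one_div]
  · have hsq : ∑ i, ∑ j, c i * c j * u ^ (a i + a j - 1)
        = (∑ i, c i * u ^ (a i - 1 / 2)) ^ 2 := by
      rw [sq, Finset.sum_mul_sum]
      refine Finset.sum_congr rfl fun i _ => Finset.sum_congr rfl fun j _ => ?_
      rw [show a i + a j - 1 = (a i - 1 / 2) + (a j - 1 / 2) by ring, rpow_add hu.1]
      ring
    rw [hsq]
    positivity

theorem sum_sum_mul_mul_add_mul_log_add_nonneg {x c : ι → ℝ}
    (hx : ∀ i, 0 ≤ x i) (hc : ∑ i, c i = 0) :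
    0 ≤ ∑ i, ∑ j, c i * c j * ((x i + x j) * log (x i + x j)) := by
  have hxx : ∀ i j, 0 ≤ x i + x j := fun i j => add_nonneg (hx i) (hx j)
  refine sum_sum_nonneg_of_eq_integral
    (F := fun i j v => c i * c j * ((x i + x j) * (x i + x j - 1) / (v * (x i + x j) + (1 - v))))
    (fun i j => ((continuousOn_mul_sub_one_div (hxx i j)).intervalIntegrable_of_Icc
      zero_le_one).const_mul _)
    (fun i j => by rw [intervalIntegral.integral_const_mul, ← mul_log_eq_integral (hxx i j)])
    (fun v hv => ?_)
  set t := (1 - v) / v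
  have hsplit : ∀ i j, c i * c j * ((x i + x j) * (x i + x j - 1) / (v * (x i + x j) + (1 - v)))
      = c i * c j * ((x i - 1 / v) / v + x j / v)
        + (1 - v) / v ^ 3 * (c i * c j / ((x i + t / 2) + (x j + t / 2))) := by
    intro i j
    rw [mul_sub_one_div_eq (hxx i j) hv]
    ring
  have ht : 0 < t := div_pos (by linarith [hv.2]) hv.1
  simp only [hsplit, Finset.sum_add_distrib, sum_sum_mul_mul_add_eq_zero hc, ← Finset.mul_sum,
    zero_add]
  exact mul_nonneg (div_nonneg (by linarith [hv.2]) (pow_nonneg hv.1.le 3))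
    (sum_sum_mul_div_add_nonneg _ c fun i => by linarith [hx i])

namespace IsCondNegDef

theorem sum {κ : Type*} (s : Finset κ) {D : κ → ι → ι → ℝ}
    (hD : ∀ k ∈ s, IsCondNegDef (D k)) : IsCondNegDef fun i j => ∑ k ∈ s, D k i j := by
  intro c hc
  calc ∑ i, ∑ j, c i * c j * ∑ k ∈ s, D k i j
        = ∑ i, ∑ k ∈ s, ∑ j, c i * c j * D k i j := by
        simp only [Finset.mul_sum]
        exact Finset.sum_congr rfl fun _ _ => Finset.sum_comm
    _ = ∑ k ∈ s, ∑ i, ∑ j, c i * c j * D k i j := Finset.sum_comm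
    _ ≤ 0 := Finset.sum_nonpos fun k hk => hD k hk c hc

theorem posSemidef {D : ι → ι → ℝ} (hD : IsCondNegDef D) (hsymm : ∀ i j, D i j = D j i)
    {o : ι} (ho : D o o = 0) : (Matrix.of fun i j => (D i o + D o j - D i j) / 2).PosSemidef := by
  classical
  set K := Matrix.of fun i j => (D i o + D o j - D i j) / 2
  have hKo : ∀ i, K i o = 0 ∧ K o i = 0 := fun i => by simp [K, ho, hsymm i o]
  refine posSemidef_iff_dotProduct_mulVec.mpr ⟨?_, fun y => ?_⟩
  · ext i j
    simp only [conjTranspose_apply, star_trivial, K, of_apply, hsymm i j, hsymm i o, hsymm o j]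
    ring
  -- `K` vanishes on row and column `o`, so shifting `y` at `o` to total weight zero changes
  -- nothing.
  set c : ι → ℝ := y - Pi.single o (∑ i, y i)
  have hc : ∑ i, c i = 0 := by simp [c, Finset.sum_sub_distrib]
  have hyc : ∀ i j, y i * y j * K i j = c i * c j * K i j := by
    intro i j
    by_cases hi : i = o
    · simp [hi, hKo]
    by_cases hj : j = o
    · simp [hj, hKo]
    · simp [c, hi, hj]
  calc 0 ≤ -(∑ i, ∑ j, c i * c j * D i j) / 2 := by linarith [hD c hc]
    _ = ∑ i, ∑ j, c i * c j * K i j := by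
      have hsplit : ∑ i, ∑ j, c i * c j * K i j
          = (∑ i, ∑ j, c i * c j * (D i o + D o j)) / 2
            - (∑ i, ∑ j, c i * c j * D i j) / 2 := by
        simp only [Finset.sum_div, ← Finset.sum_sub_distrib, K, of_apply]
        exact Finset.sum_congr rfl fun i _ => Finset.sum_congr rfl fun j _ => by ring
      rw [hsplit, sum_sum_mul_mul_add_eq_zero hc]
      ring
    _ = star y ⬝ᵥ K *ᵥ y := by
      simp only [← hyc, star_trivial, dotProduct, mulVec, Finset.mul_sum]
      exact Finset.sum_congr rfl fun i _ => Finset.sum_congr rfl fun j _ => by ring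

theorem exists_sq_norm_sub_eq {D : ι → ι → ℝ} (hD : IsCondNegDef D)
    (hsymm : ∀ i j, D i j = D j i) (hzero : ∀ i, D i i = 0) :
    ∃ f : ι → EuclideanSpace ℝ ι, ∀ i j, ‖f i - f j‖ ^ 2 = D i j := by
  classical
  rcases isEmpty_or_nonempty ι with hι | ⟨⟨o⟩⟩
  · exact ⟨0, fun i => isEmptyElim i⟩
  open scoped MatrixOrder in
  obtain ⟨B, hB⟩ :=
    CStarAlgebra.nonneg_iff_eq_star_mul_self.mp (hD.posSemidef hsymm (hzero o)).nonneg
  refine ⟨fun i => WithLp.toLp 2 fun k => B k i, fun i j => ?_⟩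
  have hinner : ∀ i j, inner ℝ (WithLp.toLp 2 fun k => B k i : EuclideanSpace ℝ ι)
      (WithLp.toLp 2 fun k => B k j) = (D i o + D o j - D i j) / 2 := by
    intro i j
    have hBij := congrFun (congrFun hB i) j
    simp only [of_apply] at hBij
    rw [hBij]
    simp [mul_apply, PiLp.inner_apply, mul_comm]
  rw [norm_sub_sq_real, ← real_inner_self_eq_norm_sq, ← real_inner_self_eq_norm_sq, hinner,
    hinner, hinner, hzero, hzero, hsymm o i, hsymm o j]
  ring

end IsCondNegDef

theorem isCondNegDef_fJ {x : ι → ℝ} (hx : ∀ i, 0 ≤ x i) :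
    IsCondNegDef fun i j => fJ (x i) (x j) := by
  intro c hc
  have hsplit : ∀ i j, c i * c j * fJ (x i) (x j)
      = c i * c j * (x i * log (2 * x i) + x j * log (2 * x j))
        - c i * c j * ((x i + x j) * log (x i + x j)) := by
    intro i j
    rw [fJ_eq (hx i) (hx j)]
    ring
  simp only [hsplit, Finset.sum_sub_distrib, sum_sum_mul_mul_add_eq_zero hc, zero_sub, neg_nonpos]
  exact sum_sum_mul_mul_add_mul_log_add_nonneg hx hc

theorem isCondNegDef_JS {d : ℕ} {x : ι → Fin d → ℝ}
    (hx : ∀ i k, 0 ≤ x i k) : IsCondNegDef fun i j => JS (x i) (x j) :=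
  IsCondNegDef.sum Finset.univ fun k _ => isCondNegDef_fJ fun i => hx i k

end Kernels

/-- multiplicative `(1 ± ε)` embedding of `n` points of `Δ_d` under JS
into `ℓ₂²` of dimension `O(n²·d³/ε²)`. -/
theorem js_multiplicative_embedding :
    ∃ C : ℝ, 0 < C ∧
      ∀ d n : ℕ, 1 ≤ d → 2 ≤ n → ∀ ε : ℝ, ε ∈ Set.Ioo (0 : ℝ) 1 →
        ∀ P : Finset (Fin d → ℝ),
          (∀ p ∈ P, p ∈ stdSimplex ℝ (Fin d)) → P.card = n →
          ∃ (m : ℕ) (φ : (Fin d → ℝ) → EuclideanSpace ℝ (Fin m)),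
            (m : ℝ) ≤ C * (n : ℝ) ^ 2 * (d : ℝ) ^ 3 / ε ^ 2 ∧
            ∀ p ∈ P, ∀ q ∈ P,
              (1 - ε) * JS p q ≤ ‖φ p - φ q‖ ^ 2 ∧
              ‖φ p - φ q‖ ^ 2 ≤ (1 + ε) * JS p q := by
  refine ⟨1, one_pos, fun d n hd _ ε hε P hP hcard => ?_⟩
  obtain ⟨f, hf⟩ := (isCondNegDef_JS (x := fun p : P => (p : Fin d → ℝ))
    fun p => (hP p p.2).1).exists_sq_norm_sub_eq (fun _ _ => JS_comm _ _) fun _ => JS_self _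
  let e := LinearIsometryEquiv.piLpCongrLeft 2 ℝ ℝ
    (Fintype.equivFinOfCardEq (by simpa using hcard : Fintype.card P = n))
  refine ⟨n, fun x => if hx : x ∈ P then e (f ⟨x, hx⟩) else 0, ?_, fun p hp q hq => ?_⟩
  · have hd : (1 : ℝ) ≤ d := by exact_mod_cast hd
    rw [one_mul, le_div_iff₀ (pow_pos hε.1 2)]
    calc (n : ℝ) * ε ^ 2 ≤ n * 1 := by gcongr; exact pow_le_one₀ hε.1.le hε.2.le
      _ ≤ n ^ 2 * 1 := by gcongr; exact_mod_cast Nat.le_self_pow two_ne_zero n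
      _ ≤ n ^ 2 * d ^ 3 := by gcongr; exact one_le_pow₀ hd
  · have hdist : ‖(if hx : p ∈ P then e (f ⟨p, hx⟩) else 0)
        - (if hx : q ∈ P then e (f ⟨q, hx⟩) else 0)‖ ^ 2 = JS p q := by
      rw [dif_pos hp, dif_pos hq, ← map_sub, LinearIsometryEquiv.norm_map, hf]
    have hJS : 0 ≤ JS p q := hdist ▸ sq_nonneg _
    rw [hdist]
    exact ⟨mul_le_of_le_one_left hJS (by linarith [hε.1]),
      le_mul_of_one_le_left hJS (by linarith [hε.1])⟩
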